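/- arXiv:2405.12392 — 5 statements merged into one kernel-verified Lean document; each statement's English description precedes it below -/
import Mathlib

section
/- Let X, Y, Z be integral schemes of finite type over a Noetherian scheme, with Z separated. Let f : X → Y be a proper surjective morphism such that the natural map 𝒪_Y → f_*𝒪_X is an isomorphism, and let g : X → Z be a morphism such that for every point y ∈ Y the image g(f⁻¹(y)) consists of a single point of Z. Then g factors through f: there exists a (unique) morphism h : Y → Z with g = h ∘ f. -/
/-!
Being closed and surjective, `f` is a topological quotient map, so `g`, which is constant on the
fibres of `f`, descends to a continuous map `b : Y → Z`. Since `f^♯ : 𝒪_Y → f_*𝒪_X` is an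
isomorphism, the sheaf map `g^♯ : 𝒪_Z → g_*𝒪_X = b_*f_*𝒪_X` descends to `𝒪_Z → b_*𝒪_Y` by
composing with `b_*(f^♯)⁻¹`. The stalk map of the descended morphism at `f x` is local because
its composite with the local map `f_x` is the local map `g_x`. The same two facts (surjectivity
of `f` and invertibility of `f^♯`) make `f` an epimorphism, which gives uniqueness.
-/

open AlgebraicGeometry CategoryTheory

theorem Function.factorsThrough_of_image_preimage_singleton {α β γ : Type*} {f : α → β}
    {g : α → γ} (h : ∀ y, ∃ z, g '' (f ⁻¹' {y}) = {z}) : g.FactorsThrough f := by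
  intro a a' haa'
  obtain ⟨z, hz⟩ := h (f a)
  have ha : g a ∈ g '' (f ⁻¹' {f a}) := ⟨a, rfl, rfl⟩
  have ha' : g a' ∈ g '' (f ⁻¹' {f a}) := ⟨a', haa'.symm, rfl⟩
  rw [hz] at ha ha'
  exact ha.trans ha'.symm

namespace AlgebraicGeometry.PresheafedSpace

variable {C : Type*} [Category C] {X Y Z : PresheafedSpace C} (f : X ⟶ Y) [IsIso f.c]

noncomputable def descOfIsIsoC (g : X ⟶ Z) (b : (Y : TopCat) ⟶ Z) (hb : f.base ≫ b = g.base) :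
    Y ⟶ Z where
  base := b
  c := g.c ≫ (TopCat.Presheaf.pushforwardEq hb.symm X.presheaf).hom ≫
    (TopCat.Presheaf.Pushforward.comp f.base b X.presheaf).hom ≫
    (TopCat.Presheaf.pushforward C b).map (inv f.c)

theorem comp_descOfIsIsoC (g : X ⟶ Z) (b : (Y : TopCat) ⟶ Z) (hb : f.base ≫ b = g.base) :
    f ≫ descOfIsIsoC f g b hb = g := by
  revert hb
  obtain ⟨g, c⟩ := g
  intro hb
  cases hb
  refine hext _ _ rfl (heq_of_eq ?_)
  show (c ≫ _ ≫ _ ≫ _) ≫ (TopCat.Presheaf.pushforward C b).map f.c = c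
  simp only [Category.assoc, ← Functor.map_comp, IsIso.inv_hom_id]
  -- `pushforwardEq rfl` is the identity only up to an `eqToHom` on each section
  ext U
  simp only [TopCat.Presheaf.pushforward_obj_obj, CategoryTheory.Functor.map_id, Category.comp_id,
    TopCat.Presheaf.comp_app, TopologicalSpace.Opens.map_comp_obj,
    TopCat.Presheaf.pushforwardEq_hom_app, Functor.op_obj, TopCat.Presheaf.Pushforward.comp_hom_app]
  erw [eqToHom_refl, X.presheaf.map_id, Category.comp_id]

theorem epi_of_surjective_of_isIso_c (hf : Function.Surjective f.base) : Epi f where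
  left_cancellation {Z} a b hab := by
    have hbase : a.base = b.base :=
      ((TopCat.epi_iff_surjective f.base).2 hf).left_cancellation _ _ congr(($hab).base)
    obtain ⟨a, ac⟩ := a
    obtain ⟨b, bc⟩ := b
    subst hbase
    have hc : ac ≫ (TopCat.Presheaf.pushforward C a).map f.c =
        bc ≫ (TopCat.Presheaf.pushforward C a).map f.c :=
      eq_of_heq (Hom.mk.inj hab).2
    rw [(cancel_mono _).1 hc]

end AlgebraicGeometry.PresheafedSpace

theorem AlgebraicGeometry.LocallyRingedSpace.isLocalHom_stalkMap_of_comp_eq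
    {X Y Z : LocallyRingedSpace} (f : X ⟶ Y) (g : X ⟶ Z)
    {h : Y.toPresheafedSpace ⟶ Z.toPresheafedSpace} (hfg : f.toPshHom ≫ h = g.toPshHom)
    (x : X) :
    IsLocalHom (h.stalkMap (f.base x)).hom := by
  obtain ⟨g, hg⟩ := g
  subst hfg
  have := hg x
  rw [PresheafedSpace.stalkMap.comp] at this
  have : IsLocalHom ((f.stalkMap x).hom.comp (h.stalkMap (f.base x)).hom) := this
  exact isLocalHom_of_comp _ (f.stalkMap x).hom

namespace AlgebraicGeometry.Scheme.Hom

variable {X Y Z : Scheme} (f : X ⟶ Y) [IsIso f.c] [Surjective f]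

theorem exists_comp_eq_of_isIso_c (g : X ⟶ Z) (b : (Y : TopCat) ⟶ Z)
    (hb : f.base ≫ b = g.base) : ∃ h : Y ⟶ Z, f ≫ h = g := by
  have hfg := PresheafedSpace.comp_descOfIsIsoC f.toPshHom g.toPshHom b hb
  refine ⟨⟨⟨PresheafedSpace.descOfIsIsoC f.toPshHom g.toPshHom b hb, fun y => ?_⟩⟩,
    Scheme.Hom.ext' (LocallyRingedSpace.Hom.ext' hfg)⟩
  obtain ⟨x, rfl⟩ := f.surjective y
  exact LocallyRingedSpace.isLocalHom_stalkMap_of_comp_eq f.toLRSHom g.toLRSHom hfg x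

theorem epi_of_surjective_of_isIso_c : Epi f where
  left_cancellation {Z} a b hab := by
    have := PresheafedSpace.epi_of_surjective_of_isIso_c f.toPshHom f.surjective
    have hab' : f.toPshHom ≫ a.toPshHom = f.toPshHom ≫ b.toPshHom :=
      congrArg (fun k : X ⟶ Z => k.toPshHom) hab
    exact Scheme.Hom.ext' (LocallyRingedSpace.Hom.ext' ((cancel_epi f.toPshHom).1 hab'))

end AlgebraicGeometry.Scheme.Hom

theorem rigidity_lemma_global_general
    (X Y Z : Scheme)
    (f : X ⟶ Y) [IsProper f] [Surjective f]
    (hO : ∀ U : Y.Opens, IsIso (f.app U))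
    (g : X ⟶ Z)
    (hfib : ∀ y : Y, ∃ z : Z, g.base '' (f.base ⁻¹' {y}) = {z}) :
    ∃! h : Y ⟶ Z, g = f ≫ h := by
  have hq : Topology.IsQuotientMap f := f.isClosedMap.isQuotientMap f.continuous f.surjective
  have hg : Function.FactorsThrough g f :=
    Function.factorsThrough_of_image_preimage_singleton hfib
  have (U : Y.Opens) : IsIso (f.c.app (Opposite.op U)) := hO U
  have : IsIso f.c := NatIso.isIso_of_isIso_app _
  have := f.epi_of_surjective_of_isIso_c
  obtain ⟨h, hh⟩ := f.exists_comp_eq_of_isIso_c g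
    (TopCat.ofHom (hq.lift ⟨g, g.continuous⟩ hg))
    (by ext x; exact congr($(hq.lift_comp ⟨g, g.continuous⟩ hg) x))
  exact ⟨h, hh.symm, fun h' hh' => (cancel_epi f).1 (hh'.symm.trans hh.symm)⟩

/-- **Rigidity Lemma, global form.** Let `X, Y, Z` be integral schemes of finite type over a
Noetherian scheme `S`, with `Z` separated (over `S`). Let `f : X ⟶ Y` be a proper surjective
morphism such that the natural map `𝒪_Y → f_* 𝒪_X` is an isomorphism (i.e. `f.app U` is an
isomorphism for every open `U ⊆ Y`), and let `g : X ⟶ Z` be a morphism such that for every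
`y ∈ Y` the image `g(f⁻¹(y))` is a single point. Then `g` factors uniquely through `f`. -/
theorem rigidity_lemma_global
    (S X Y Z : Scheme) [AlgebraicGeometry.IsNoetherian S]
    [IsIntegral X] [IsIntegral Y] [IsIntegral Z]
    (sX : X ⟶ S) (sY : Y ⟶ S) (sZ : Z ⟶ S)
    [LocallyOfFiniteType sX] [QuasiCompact sX]
    [LocallyOfFiniteType sY] [QuasiCompact sY]
    [LocallyOfFiniteType sZ] [QuasiCompact sZ]
    [IsSeparated sZ]
    (f : X ⟶ Y) [IsProper f] [Surjective f] (hfS : f ≫ sY = sX)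
    (hO : ∀ U : Y.Opens, IsIso (f.app U))
    (g : X ⟶ Z) (hgS : g ≫ sZ = sX)
    (hfib : ∀ y : Y, ∃ z : Z, g.base '' (f.base ⁻¹' {y}) = {z}) :
    ∃! h : Y ⟶ Z, g = f ≫ h :=
  rigidity_lemma_global_general X Y Z f hO g hfib
end

section
/- Let p : W → Y be a proper morphism of integral Noetherian schemes such that the natural map 𝒪_Y → p_*𝒪_W is an isomorphism. If for some point y ∈ Y the fiber p⁻¹(y) consists of a single point, then there exists an open neighborhood U of y in Y such that p restricts to an isomorphism p⁻¹(U) → U. -/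
open AlgebraicGeometry CategoryTheory

/-!
Since `p` is closed and its fibre over `y` is the single point `w`, every affine neighbourhood `V`
of `w` contains `p⁻¹ U₀` for some affine neighbourhood `U₀` of `y`. A basic open `D(c) ⊆ p⁻¹ U₀`
of `V` around `w` is the preimage of `D(s)`, where `p^♯ s = c|_{p⁻¹ U₀}`; such an `s` exists
because `𝒪_Y(U₀) ≅ 𝒪_W(p⁻¹ U₀)`. Over `D(s)`, `p` is then a morphism of affine schemes inducing
an isomorphism on global sections, hence an isomorphism.
-/

namespace AlgebraicGeometry

lemma isIso_of_isAffine_of_isIso_appTop {X Y : Scheme} [IsAffine X] [IsAffine Y] (f : X ⟶ Y)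
    [IsIso f.appTop] : IsIso f := by
  rw [(Iso.inv_comp_eq _).mp (Scheme.isoSpec_inv_naturality f).symm]
  infer_instance

lemma isIso_morphismRestrict_of_isAffineOpen {X Y : Scheme} (f : X ⟶ Y) {U : Y.Opens}
    (hU : IsAffineOpen U) (hfU : IsAffineOpen (f ⁻¹ᵁ U)) [IsIso (f.app U)] :
    IsIso (f ∣_ U) := by
  have : IsAffine U := hU
  have : IsAffine (f ⁻¹ᵁ U) := hfU
  have : IsIso (f.app (U.ι ''ᵁ ⊤)) := by
    rw [U.ι_image_top]; infer_instance
  have : IsIso (f ∣_ U).appTop := by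
    rw [morphismRestrict_appTop]
    exact IsIso.comp_isIso' this
      (X.presheaf.mapIso (eqToIso (image_morphismRestrict_preimage f U ⊤)).op).isIso_hom
  exact isIso_of_isAffine_of_isIso_appTop _

lemma Scheme.Hom.exists_isAffineOpen_mem_preimage_le {X Y : Scheme} (f : X ⟶ Y)
    (hf : IsClosedMap f.base) {V : X.Opens} {y : Y} (hV : f.base ⁻¹' {y} ⊆ V) :
    ∃ U : Y.Opens, IsAffineOpen U ∧ y ∈ U ∧ f ⁻¹ᵁ U ≤ V := by
  have hfib : ∀ᶠ y' in nhds y, f.base ⁻¹' {y'} ⊆ V :=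
    hf.eventually_nhds_fiber y fun x hx ↦ V.isOpen.mem_nhds (hV hx)
  obtain ⟨_, ⟨U, hU, rfl⟩, hyU, hUV⟩ := Y.isBasis_affineOpens.mem_nhds_iff.mp hfib
  exact ⟨U, hU, hyU, fun x hx ↦ hUV hx rfl⟩

lemma Scheme.Hom.exists_mem_preimage_basicOpen_isAffineOpen {X Y : Scheme} (f : X ⟶ Y)
    {U : Y.Opens} [IsIso (f.app U)] {V : X.Opens} (hV : IsAffineOpen V) (hUV : f ⁻¹ᵁ U ≤ V)
    {x : X} (hx : x ∈ f ⁻¹ᵁ U) :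
    ∃ s : Γ(Y, U), x ∈ f ⁻¹ᵁ Y.basicOpen s ∧ IsAffineOpen (f ⁻¹ᵁ Y.basicOpen s) := by
  obtain ⟨c, hcU, hxc⟩ := hV.exists_basicOpen_le ⟨x, hx⟩ (hUV hx)
  obtain ⟨s, hs⟩ :=
    (ConcreteCategory.bijective_of_isIso (f.app U)).2 (X.presheaf.map (homOfLE hUV).op c)
  have hpre : f ⁻¹ᵁ Y.basicOpen s = X.basicOpen c := by
    rw [Scheme.preimage_basicOpen, hs, Scheme.basicOpen_res, inf_eq_right.mpr hcU]
  exact ⟨s, hpre ▸ hxc, hpre ▸ hV.basicOpen c⟩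

end AlgebraicGeometry

theorem proper_O_iso_singleton_fiber_local_iso_general
    (W Y : Scheme)
    (p : W ⟶ Y) [IsProper p]
    (hO : ∀ U : Y.Opens, IsIso (p.app U))
    (y : Y) (hy : ∃ w : W, p.base ⁻¹' {y} = {w}) :
    ∃ U : Y.Opens, y ∈ U ∧ IsIso (p ∣_ U) := by
  obtain ⟨w, hw⟩ := hy
  have hwy : p.base w = y := hw.ge rfl
  obtain ⟨V, hV, hwV, -⟩ :=
    exists_isAffineOpen_mem_and_subset (show w ∈ (⊤ : W.Opens) from trivial)
  obtain ⟨U₀, hU₀, hyU₀, hU₀V⟩ :=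
    p.exists_isAffineOpen_mem_preimage_le p.isClosedMap (hw ▸ Set.singleton_subset_iff.mpr hwV)
  have := hO U₀
  obtain ⟨s, hws, hs⟩ :=
    p.exists_mem_preimage_basicOpen_isAffineOpen hV hU₀V (show p.base w ∈ U₀ from hwy ▸ hyU₀)
  have := hO (Y.basicOpen s)
  exact ⟨Y.basicOpen s, hwy ▸ hws,
    isIso_morphismRestrict_of_isAffineOpen p (hU₀.basicOpen s) hs⟩

/-- Let `p : W ⟶ Y` be a proper morphism of integral Noetherian schemes such that the natural
map `𝒪_Y → p_* 𝒪_W` is an isomorphism (i.e. `p.app U` is an isomorphism for every open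
`U ⊆ Y`). If for some point `y ∈ Y` the fiber `p⁻¹(y)` is a single point, then there is an
open neighbourhood `U` of `y` over which `p` restricts to an isomorphism `p⁻¹(U) → U`. -/
theorem proper_O_iso_singleton_fiber_local_iso
    (W Y : Scheme)
    [AlgebraicGeometry.IsNoetherian W] [AlgebraicGeometry.IsNoetherian Y]
    [IsIntegral W] [IsIntegral Y]
    (p : W ⟶ Y) [IsProper p]
    (hO : ∀ U : Y.Opens, IsIso (p.app U))
    (y : Y) (hy : ∃ w : W, p.base ⁻¹' {y} = {w}) :
    ∃ U : Y.Opens, y ∈ U ∧ IsIso (p ∣_ U) :=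
  proper_O_iso_singleton_fiber_local_iso_general W Y p hO y hy
end

section
/- Let 𝒪 be the ring of integers of a finite extension of ℚ_p (or of a number field). Let q : W → X be a proper morphism of integral finite-type 𝒪-schemes which is birational, i.e. there exist dense open subschemes V ⊆ W and U ⊆ X such that q restricts to an isomorphism V → U. Let w be a closed point of W and set x = q(w). Suppose the induced map Spec 𝒪_{W,w} → Spec 𝒪_{X,x} admits a formal section: there exists a local homomorphism of 𝒪_{X,x}-algebras 𝒪_{W,w} → \widehat{𝒪_{X,x}}, where \widehat{𝒪_{X,x}} is the completion of the local ring 𝒪_{X,x} at its maximal ideal, whose composition with the natural map 𝒪_{X,x} → 𝒪_{W,w} is the canonical completion map. Then the induced local homomorphism 𝒪_{X,x} → 𝒪_{W,w} is an isomorphism; that is, q is an isomorphism in a neighborhood of w. -/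
/-!
Write `A = 𝒪_{X,x}`, `B = 𝒪_{W,w}` and `f : A → B` for the stalk map. Since `q` is birational,
`A` and `B` are domains with the same fraction field, so every `b ∈ B` satisfies
`f a' * b = f a` for some `a, a' ∈ A` with `a' ≠ 0`. Applying the formal section gives
`a = a' * φ b` in `Â`, and since `Â` is faithfully flat over the Noetherian local ring `A`,
`(a') Â ∩ A = (a')`; hence `a = a' r` with `r ∈ A`, and `b = f r`. Faithful flatness also
makes `A → Â = φ ∘ f` injective, so `f` is bijective.
-/

open AlgebraicGeometry CategoryTheory NumberField IsLocalRing

section FaithfullyFlat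

variable {A B C : Type*} [CommRing A] [CommRing B] [CommRing C] [Algebra A C]
  [Module.FaithfullyFlat A C] {f : A →+* B} {φ : B →+* C}

theorem RingHom.injective_of_comp_eq_algebraMap (hφ : φ.comp f = algebraMap A C) :
    Function.Injective f := by
  have : Function.Injective (φ ∘ f) := by
    rw [← RingHom.coe_comp, hφ]
    exact FaithfulSMul.algebraMap_injective A C
  exact this.of_comp

theorem RingHom.mem_span_singleton_of_mul_eq_of_comp_eq_algebraMap
    (hφ : φ.comp f = algebraMap A C) {a a' : A} {b : B} (h : f a' * b = f a) :
    a ∈ Ideal.span {a'} := by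
  rw [← Ideal.comap_map_eq_self_of_faithfullyFlat (B := C) (Ideal.span {a'}), Ideal.mem_comap,
    Ideal.map_span, Set.image_singleton, Ideal.mem_span_singleton']
  refine ⟨φ b, ?_⟩
  rw [← hφ, RingHom.comp_apply, RingHom.comp_apply, ← map_mul, mul_comm, h]

theorem RingHom.mem_range_of_mul_eq_of_comp_eq_algebraMap [IsDomain B]
    (hφ : φ.comp f = algebraMap A C) {a a' : A} {b : B} (ha' : a' ≠ 0) (h : f a' * b = f a) :
    b ∈ f.range := by
  obtain ⟨r, rfl⟩ := Ideal.mem_span_singleton'.mp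
    (mem_span_singleton_of_mul_eq_of_comp_eq_algebraMap hφ h)
  have hfa' : f a' ≠ 0 := (map_ne_zero_iff f (injective_of_comp_eq_algebraMap hφ)).mpr ha'
  refine ⟨r, mul_left_cancel₀ hfa' ?_⟩
  rw [h, map_mul, mul_comm]

theorem RingHom.bijective_of_comp_eq_algebraMap [IsDomain B] (hφ : φ.comp f = algebraMap A C)
    (hfrac : ∀ b : B, ∃ a a' : A, a' ≠ 0 ∧ f a' * b = f a) : Function.Bijective f := by
  refine ⟨injective_of_comp_eq_algebraMap hφ, fun b ↦ ?_⟩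
  obtain ⟨a, a', ha', h⟩ := hfrac b
  exact mem_range_of_mul_eq_of_comp_eq_algebraMap hφ ha' h

end FaithfullyFlat

instance AdicCompletion.faithfullyFlat_maximalIdeal {R : Type*} [CommRing R] [IsNoetherianRing R]
    [IsLocalRing R] : Module.FaithfullyFlat R (AdicCompletion (maximalIdeal R) R) :=
  .of_flat_of_isLocalHom

namespace AlgebraicGeometry

variable {W X : Scheme}

lemma isDominant_of_comp_eq_comp {q : W ⟶ X} {V : W.Opens} {U : X.Opens}
    (hU : Dense (U : Set X)) (e : V.toScheme ⟶ U.toScheme) [IsIso e] (h : e ≫ U.ι = V.ι ≫ q) :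
    IsDominant q := by
  have := Opens.isDominant_ι hU
  have : IsDominant (V.ι ≫ q) := h ▸ inferInstance
  exact IsDominant.of_comp V.ι q

lemma Scheme.Hom.isGenericPoint_apply_genericPoint [IrreducibleSpace W] (q : W ⟶ X)
    [IsDominant q] : IsGenericPoint (q (genericPoint W)) Set.univ := by
  simpa [q.denseRange.closure_range] using (genericPoint_spec W).image q.continuous

lemma isIso_stalkMap_genericPoint_of_comp_eq_comp [IsIntegral W] {q : W ⟶ X}
    {V : W.Opens} [Nonempty V] {U : X.Opens} (e : V.toScheme ⟶ U.toScheme) [IsIso e]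
    (h : e ≫ U.ι = V.ι ≫ q) : IsIso (q.stalkMap (genericPoint W)) := by
  rw [← genericPoint_eq_of_isOpenImmersion V.ι]
  have hst := Scheme.Hom.stalkMap_congr_hom _ _ h.symm (genericPoint V)
  rw [Scheme.Hom.stalkMap_comp, Scheme.Hom.stalkMap_comp] at hst
  have : IsIso (q.stalkMap (V.ι (genericPoint V)) ≫ V.ι.stalkMap (genericPoint V)) := by
    rw [hst]
    have : IsIso (U.ι.stalkMap (e (genericPoint V))) := inferInstance
    exact IsIso.comp_isIso' (Iso.isIso_hom _) (IsIso.comp_isIso' this inferInstance)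
  exact IsIso.of_isIso_comp_right _ (V.ι.stalkMap (genericPoint V))

lemma Scheme.stalkSpecializes_injective_of_isGenericPoint [IsIntegral X] {p x : X}
    (hp : IsGenericPoint p Set.univ) (hs : p ⤳ x) :
    Function.Injective (X.presheaf.stalkSpecializes hs) := by
  obtain rfl := hp.eq (genericPoint_spec X)
  exact IsFractionRing.injective (X.presheaf.stalk x) X.functionField

lemma Scheme.exists_mul_stalkSpecializes_eq_of_isGenericPoint [IsIntegral X] {p x : X}
    (hp : IsGenericPoint p Set.univ) (hs : p ⤳ x) (z : X.presheaf.stalk p) :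
    ∃ a a' : X.presheaf.stalk x, a' ≠ 0 ∧
      z * X.presheaf.stalkSpecializes hs a' = X.presheaf.stalkSpecializes hs a := by
  obtain rfl := hp.eq (genericPoint_spec X)
  obtain ⟨⟨a, a'⟩, ha⟩ := IsLocalization.surj (nonZeroDivisors (X.presheaf.stalk x)) z
  exact ⟨a, a', nonZeroDivisors.ne_zero a'.2, ha⟩

lemma Scheme.Hom.exists_stalkMap_mul_eq [IsIntegral W] [IsIntegral X] (q : W ⟶ X)
    [IsDominant q] [IsIso (q.stalkMap (genericPoint W))] (w : W) (b : W.presheaf.stalk w) :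
    ∃ a a' : X.presheaf.stalk (q w), a' ≠ 0 ∧ q.stalkMap w a' * b = q.stalkMap w a := by
  have hs : genericPoint W ⤳ w := genericPoint_specializes w
  obtain ⟨z, hz⟩ := (ConcreteCategory.bijective_of_isIso (q.stalkMap (genericPoint W))).2
    (W.presheaf.stalkSpecializes hs b)
  obtain ⟨a, a', ha', hfrac⟩ := exists_mul_stalkSpecializes_eq_of_isGenericPoint
    q.isGenericPoint_apply_genericPoint (hs.map q.continuous) z
  refine ⟨a, a', ha', stalkSpecializes_injective_of_isGenericPoint (genericPoint_spec W) hs ?_⟩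
  have := congrArg (q.stalkMap (genericPoint W)) hfrac
  rwa [map_mul, hz, q.stalkSpecializes_stalkMap_apply, q.stalkSpecializes_stalkMap_apply,
    mul_comm, ← map_mul] at this

end AlgebraicGeometry

theorem iso_near_point_of_formal_section_general
    (K : Type) [Field K] [NumberField K]
    (W X : Scheme) [IsIntegral W] [IsIntegral X]
    (sX : X ⟶ Spec (CommRingCat.of (𝓞 K)))
    [LocallyOfFiniteType sX]
    (q : W ⟶ X)
    (hbir : ∃ (V : W.Opens) (U : X.Opens),
      Dense (V : Set W) ∧ Dense (U : Set X) ∧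
      ∃ e : (V : Scheme) ⟶ (U : Scheme), IsIso e ∧ e ≫ U.ι = V.ι ≫ q)
    (w : W)
    (φ : W.presheaf.stalk w →+*
      AdicCompletion (IsLocalRing.maximalIdeal (X.presheaf.stalk (q.base w)))
        (X.presheaf.stalk (q.base w)))
    (hφsec : ∀ a : X.presheaf.stalk (q.base w),
      φ (q.stalkMap w a) =
        algebraMap (X.presheaf.stalk (q.base w))
          (AdicCompletion (IsLocalRing.maximalIdeal (X.presheaf.stalk (q.base w)))
            (X.presheaf.stalk (q.base w))) a) :
    IsIso (q.stalkMap w) := by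
  obtain ⟨V, U, hV, hU, e, he, hcomm⟩ := hbir
  have : Nonempty V := hV.nonempty.to_subtype
  have := isDominant_of_comp_eq_comp hU e hcomm
  have := isIso_stalkMap_genericPoint_of_comp_eq_comp e hcomm
  have : IsNoetherianRing (CommRingCat.of (𝓞 K)) := inferInstanceAs (IsNoetherianRing (𝓞 K))
  have := LocallyOfFiniteType.isLocallyNoetherian sX
  rw [ConcreteCategory.isIso_iff_bijective]
  exact RingHom.bijective_of_comp_eq_algebraMap (RingHom.ext hφsec) (q.exists_stalkMap_mul_eq w)

/-- Let `𝒪 = 𝓞 K` be the ring of integers of a number field `K` (the statement equally applies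
to rings of integers of finite extensions of `ℚ_p`). Let `q : W ⟶ X` be a proper birational
morphism of integral finite-type `𝒪`-schemes, i.e. there are dense opens `V ⊆ W`, `U ⊆ X`
such that `q` restricts to an isomorphism `V → U`. Let `w` be a closed point of `W` with image
`x = q(w)`, and suppose the map of local rings `𝒪_{X,x} → 𝒪_{W,w}` admits a formal section:
a local ring homomorphism `φ : 𝒪_{W,w} →+* (𝒪_{X,x})^∧` to the maximal-adic completion whose
composite with `𝒪_{X,x} → 𝒪_{W,w}` is the canonical completion map. Then
`𝒪_{X,x} → 𝒪_{W,w}` is an isomorphism, i.e. `q` is an isomorphism near `w`. -/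
theorem iso_near_point_of_formal_section
    (K : Type) [Field K] [NumberField K]
    (W X : Scheme) [IsIntegral W] [IsIntegral X]
    (sW : W ⟶ Spec (CommRingCat.of (𝓞 K))) (sX : X ⟶ Spec (CommRingCat.of (𝓞 K)))
    [LocallyOfFiniteType sW] [QuasiCompact sW]
    [LocallyOfFiniteType sX] [QuasiCompact sX]
    (q : W ⟶ X) [IsProper q] (hqS : q ≫ sX = sW)
    (hbir : ∃ (V : W.Opens) (U : X.Opens),
      Dense (V : Set W) ∧ Dense (U : Set X) ∧
      ∃ e : (V : Scheme) ⟶ (U : Scheme), IsIso e ∧ e ≫ U.ι = V.ι ≫ q)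
    (w : W) (hw : IsClosed ({w} : Set W))
    (φ : W.presheaf.stalk w →+*
      AdicCompletion (IsLocalRing.maximalIdeal (X.presheaf.stalk (q.base w)))
        (X.presheaf.stalk (q.base w)))
    (hφloc : IsLocalHom φ)
    (hφsec : ∀ a : X.presheaf.stalk (q.base w),
      φ (q.stalkMap w a) =
        algebraMap (X.presheaf.stalk (q.base w))
          (AdicCompletion (IsLocalRing.maximalIdeal (X.presheaf.stalk (q.base w)))
            (X.presheaf.stalk (q.base w))) a) :
    IsIso (q.stalkMap w) :=
  iso_near_point_of_formal_section_general K W X sX q hbir w φ hφsec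
end

section
/- Let K be a field of characteristic zero, V a finite-dimensional K-vector space, and let s, u ∈ GL(V) be commuting automorphisms such that s is semisimple (its minimal polynomial is squarefree) and u is unipotent (u − 1 is nilpotent). Then for every positive integer m there exists h ∈ GL(V) commuting with s such that h⁻¹ u h = uᵐ. -/
/-!
Put `n = u - 1` and `w = ∑ i < m, u ^ i`, so that `u ^ m - 1 = n * w`. Since `w ≡ m` modulo the
nilpotent `n` and `m ≠ 0` in `K`, `w` is a unit commuting with `n`; hence `n` and `n * w` have the
same kernels of powers and the same range.

Because `s` is semisimple and commutes with `n`, there are `s`-stable subspaces `W j`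
complementing `ker n ^ j + range n` inside `ker n ^ (j + 1)`. The vectors `n ^ i x` with
`x ∈ W j`, `i ≤ j`, then decompose `V` into Jordan chains of `n`; as the conditions on the `W j`
only involve kernels of powers and the range, the vectors `(n * w) ^ i x` decompose `V` into
Jordan chains of `n * w`.
Sending `(n * w) ^ i x` to `n ^ i x` is an automorphism commuting with `s` that conjugates
`u ^ m - 1` into `u - 1`, i.e. `u ^ m` into `u`.
-/

open LinearMap (ker range)

namespace Module.End

variable {R M : Type*} [Ring R] [AddCommGroup M] [Module R M]

lemma ker_mem_invtSubmodule_of_commute {f g : End R M} (h : Commute f g) :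
    ker f ∈ g.invtSubmodule := fun x (hx : f x = 0) => by
  change f (g x) = 0
  rw [← mul_apply, h.eq, mul_apply, hx, map_zero]

lemma range_mem_invtSubmodule_of_commute {f g : End R M} (h : Commute f g) :
    range f ∈ g.invtSubmodule := by
  rintro _ ⟨x, rfl⟩
  exact ⟨g x, by rw [← mul_apply, h.eq, mul_apply]⟩

lemma ker_pow_mul_of_isUnit {f w : End R M} (hw : IsUnit w) (hfw : Commute f w) (t : ℕ) :
    ker ((f * w) ^ t) = ker (f ^ t) := by
  rw [hfw.mul_pow, (hfw.pow_pow t t).eq, mul_eq_comp, LinearMap.ker_comp_of_ker_eq_bot]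
  exact LinearMap.ker_eq_bot.mpr ((isUnit_iff _).mp (hw.pow t)).injective

lemma range_mul_of_isUnit {f w : End R M} (hw : IsUnit w) : range (f * w) = range f :=
  LinearMap.range_comp_of_range_eq_top f
    (LinearMap.range_eq_top.mpr ((isUnit_iff _).mp hw).surjective)

lemma eq_top_of_sup_range_eq_top {f : End R M} (hf : IsNilpotent f) {p : Submodule R M}
    (hp : p ∈ f.invtSubmodule) (h : p ⊔ range f = ⊤) : p = ⊤ := by
  have key : ∀ k, p ⊔ range (f ^ k) = ⊤ := by
    intro k
    induction k with
    | zero => simp [one_eq_id]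
    | succ k ih =>
      refine eq_top_iff.mpr (h.symm.le.trans (sup_le le_sup_left ?_))
      rw [← Submodule.map_top, ← ih, Submodule.map_sup, pow_succ', mul_eq_comp,
        LinearMap.range_comp]
      exact sup_le_sup_right ((mem_invtSubmodule_iff_map_le f).mp hp) _
  obtain ⟨N, hN⟩ := hf
  simpa [hN] using key N

lemma eq_bot_of_disjoint_ker {g : End R M} (hg : IsNilpotent g) {p : Submodule R M}
    (hp : p ∈ g.invtSubmodule) (h : Disjoint p (ker g)) : p = ⊥ := by
  have key : ∀ k, ∀ x ∈ p, (g ^ k) x = 0 → x = 0 := by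
    intro k
    induction k with
    | zero => simp
    | succ k ih =>
      intro x hx hgx
      rw [pow_succ, mul_apply] at hgx
      exact (Submodule.disjoint_def.mp h) x hx (ih (g x) (hp hx) hgx)
  obtain ⟨N, hN⟩ := hg
  exact (Submodule.eq_bot_iff p).mpr fun x hx => key N x hx (by simp [hN])

end Module.End

namespace JordanChains

variable {R M : Type*} [Ring R] [AddCommGroup M] [Module R M]
variable (N : ℕ) (W : ℕ → Submodule R M)

abbrev Space : Type _ := (j : Fin N) → Fin (j + 1) → W j

def shift : Space N W →ₗ[R] Space N W where
  toFun x j := Fin.cons 0 fun i => x j i.castSucc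
  map_add' x y := by
    funext j i
    cases i using Fin.cases <;> simp
  map_smul' c x := by
    funext j i
    cases i using Fin.cases <;> simp

def eval (f : Module.End R M) : Space N W →ₗ[R] M :=
  ∑ j : Fin N, ∑ i : Fin (j + 1),
    (f ^ (i : ℕ)) ∘ₗ (W j).subtype ∘ₗ LinearMap.proj i ∘ₗ LinearMap.proj j

def map (g : Module.End R M) (hg : ∀ j, W j ∈ g.invtSubmodule) :
    Space N W →ₗ[R] Space N W :=
  LinearMap.piMap fun j => LinearMap.piMap fun _ => g.restrict (hg j)

variable {N W}

lemma eval_apply (f : Module.End R M) (x : Space N W) :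
    eval N W f x = ∑ j : Fin N, ∑ i : Fin (j + 1), (f ^ (i : ℕ)) (x j i) := by
  simp [eval]

lemma shift_pow_apply_eq_zero (k : ℕ) (x : Space N W) (j : Fin N) (i : Fin (j + 1))
    (hi : (i : ℕ) < k) : (shift N W ^ k) x j i = 0 := by
  induction k generalizing i with
  | zero => exact absurd hi (Nat.not_lt_zero _)
  | succ k ih =>
    rw [pow_succ', Module.End.mul_apply]
    cases i using Fin.cases with
    | zero => rfl
    | succ i => exact ih i.castSucc (by simp at hi ⊢; omega)

lemma isNilpotent_shift : IsNilpotent (shift N W) :=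
  ⟨N, LinearMap.ext fun x => funext fun j => funext fun i =>
    shift_pow_apply_eq_zero N x j i (by omega)⟩

lemma eval_shift {f : Module.End R M} (hW : ∀ j, W j ≤ ker (f ^ (j + 1))) (x : Space N W) :
    eval N W f (shift N W x) = f (eval N W f x) := by
  simp only [eval_apply, map_sum]
  refine Finset.sum_congr rfl fun j _ => ?_
  rw [Fin.sum_univ_succ, Fin.sum_univ_castSucc]
  have htop : f ((f ^ (j : ℕ)) (x j (Fin.last j))) = 0 := by
    rw [← Module.End.mul_apply, ← pow_succ']
    exact hW j (x j (Fin.last j)).2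
  simp [shift, htop, pow_succ']

lemma eval_map {f g : Module.End R M} (hg : ∀ j, W j ∈ g.invtSubmodule) (hfg : Commute f g)
    (x : Space N W) : eval N W f (map N W g hg x) = g (eval N W f x) := by
  simp only [eval_apply, map_sum]
  refine Finset.sum_congr rfl fun j _ => Finset.sum_congr rfl fun i _ => ?_
  change (f ^ (i : ℕ)) (g (x j i)) = g ((f ^ (i : ℕ)) (x j i))
  rw [← Module.End.mul_apply, (hfg.pow_left _).eq, Module.End.mul_apply]

lemma eval_single_zero (f : Module.End R M) (j : Fin N) (v : W j) :
    eval N W f (Pi.single j (Pi.single 0 v)) = v := by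
  rw [eval_apply, Finset.sum_eq_single j (fun b _ hb => by simp [Pi.single_eq_of_ne hb]) (by simp),
    Fin.sum_univ_succ]
  simp

variable {f : Module.End R M}

-- `W j` is a space of generators `x` of Jordan chains `x, f x, …, f ^ j x` of `f`.
structure IsGenerators (f : Module.End R M) (W : ℕ → Submodule R M) : Prop where
  le_ker : ∀ j, W j ≤ ker (f ^ (j + 1))
  disjoint : ∀ j, Disjoint (W j) (ker (f ^ j) ⊔ range f)
  ker_le : ∀ j, ker (f ^ (j + 1)) ≤ ker (f ^ j) ⊔ range f ⊔ W j

lemma eq_zero_of_pow_sum_eq_zero (hW : ∀ j, Disjoint (W j) (ker (f ^ j) ⊔ range f))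
    (J : ℕ) : ∀ (k : ℕ) (z : Fin J → M), (∀ j : Fin J, z j ∈ W (j + k)) →
      (f ^ k) (∑ j : Fin J, (f ^ (j : ℕ)) (z j)) = 0 → ∀ j, z j = 0 := by
  induction J with
  | zero => exact fun _ _ _ _ j => j.elim0
  | succ J ih =>
    intro k z hz h
    set c := ∑ j : Fin J, (f ^ (j : ℕ)) (z j.succ)
    have hsplit : ∑ j : Fin (J + 1), (f ^ (j : ℕ)) (z j) = z 0 + f c := by
      simp [c, Fin.sum_univ_succ, map_sum, pow_succ']
    rw [hsplit] at h
    have h0 : z 0 = 0 := by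
      refine Submodule.disjoint_def.mp (hW k) _ (by simpa using hz 0) ?_
      simpa using Submodule.sub_mem _ (Submodule.mem_sup_left (LinearMap.mem_ker.mpr h))
        (Submodule.mem_sup_right (LinearMap.mem_range_self f c))
    have hsucc : ∀ j : Fin J, z j.succ = 0 := by
      refine ih (k + 1) _ (fun j => ?_) ?_
      · rw [show (j : ℕ) + (k + 1) = j.succ + k by simp; omega]
        exact hz j.succ
      · rw [pow_succ, Module.End.mul_apply]
        rwa [h0, zero_add] at h
    intro j
    cases j using Fin.cases
    exacts [h0, hsucc _]

lemma eq_zero_of_eval_eq_zero_of_shift_eq_zero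
    (hW : ∀ j, Disjoint (W j) (ker (f ^ j) ⊔ range f)) {x : Space N W}
    (hx : eval N W f x = 0) (hs : shift N W x = 0) : x = 0 := by
  have hlow : ∀ (j : Fin N) (i : Fin j), x j i.castSucc = 0 := fun j i => by
    simpa [shift] using congrFun (congrFun hs j) i.succ
  have htop : ∀ j : Fin N, (x j (Fin.last j) : M) = 0 := by
    refine eq_zero_of_pow_sum_eq_zero hW N 0 _ (fun j => (x j _).2) ?_
    rw [← hx, eval_apply]
    simp [Fin.sum_univ_castSucc, hlow]
  funext j i
  cases i using Fin.lastCases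
  exacts [Subtype.ext (htop j), hlow j _]

lemma eval_injective (hle : ∀ j, W j ≤ ker (f ^ (j + 1)))
    (hW : ∀ j, Disjoint (W j) (ker (f ^ j) ⊔ range f)) : Function.Injective (eval N W f) := by
  rw [← LinearMap.ker_eq_bot]
  refine Module.End.eq_bot_of_disjoint_ker isNilpotent_shift (fun x hx => ?_)
    (Submodule.disjoint_def.mpr fun x hx hs => eq_zero_of_eval_eq_zero_of_shift_eq_zero hW hx hs)
  change eval N W f (shift N W x) = 0
  rw [eval_shift hle, LinearMap.mem_ker.mp hx, map_zero]

lemma eval_surjective (hle : ∀ j, W j ≤ ker (f ^ (j + 1)))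
    (hW : ∀ j, ker (f ^ (j + 1)) ≤ ker (f ^ j) ⊔ range f ⊔ W j) (hf : f ^ N = 0) :
    Function.Surjective (eval N W f) := by
  set P := range (eval N W f)
  have hP : P ∈ f.invtSubmodule := by
    rintro _ ⟨x, rfl⟩
    exact ⟨shift N W x, eval_shift hle x⟩
  have hWP : ∀ j : Fin N, W j ≤ P := fun j v hv => ⟨_, eval_single_zero f j ⟨v, hv⟩⟩
  have hker : ∀ t ≤ N, ker (f ^ t) ≤ P ⊔ range f := by
    intro t
    induction t with
    | zero => simp [Module.End.one_eq_id]
    | succ t ih =>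
      intro ht
      exact (hW t).trans <|
        sup_le (sup_le (ih (by omega)) le_sup_right) ((hWP ⟨t, ht⟩).trans le_sup_left)
  rw [← LinearMap.range_eq_top]
  refine Module.End.eq_top_of_sup_range_eq_top ⟨N, hf⟩ hP (eq_top_iff.mpr ?_)
  simpa [hf] using hker N le_rfl

lemma IsGenerators.eval_bijective (hW : IsGenerators f W) (hf : f ^ N = 0) :
    Function.Bijective (eval N W f) :=
  ⟨eval_injective hW.le_ker hW.disjoint, eval_surjective hW.le_ker hW.ker_le hf⟩

lemma IsGenerators.mul_of_isUnit {f w : Module.End R M} (hW : IsGenerators f W) (hw : IsUnit w)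
    (hfw : Commute f w) : IsGenerators (f * w) W := by
  have hker := Module.End.ker_pow_mul_of_isUnit hw hfw
  have hrange := Module.End.range_mul_of_isUnit (f := f) hw
  exact ⟨by simpa only [hker] using hW.le_ker, by simpa only [hker, hrange] using hW.disjoint,
    by simpa only [hker, hrange] using hW.ker_le⟩

end JordanChains

lemma LinearEquiv.semiconjBy_symm_trans {R M D : Type*} [Ring R] [AddCommGroup M] [Module R M]
    [AddCommGroup D] [Module R D] (φ ψ : D ≃ₗ[R] M) {T : Module.End R D}
    {f g : Module.End R M}
    (hφ : ∀ x, φ (T x) = f (φ x)) (hψ : ∀ x, ψ (T x) = g (ψ x)) :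
    SemiconjBy ((ψ.symm ≪≫ₗ φ : M ≃ₗ[R] M) : Module.End R M) g f := by
  refine LinearMap.ext fun v => ?_
  obtain ⟨x, rfl⟩ := ψ.surjective v
  simp [← hψ, hφ]

namespace Module.End

variable {R M : Type*} [CommRing R] [AddCommGroup M] [Module R M]

lemma IsSemisimple.exists_invtSubmodule_disjoint_sup_eq {s : End R M} (hs : s.IsSemisimple)
    {A B : Submodule R M} (hA : A ∈ s.invtSubmodule) (hB : B ∈ s.invtSubmodule)
    (hAB : A ≤ B) :
    ∃ C ∈ s.invtSubmodule, Disjoint A C ∧ A ⊔ C = B := by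
  obtain ⟨q, hq, hAq⟩ := isSemisimple_iff.mp hs A hA
  refine ⟨q ⊓ B, invtSubmodule.inf_mem hq hB, hAq.disjoint.mono_right inf_le_left, ?_⟩
  rw [← sup_inf_assoc_of_le q hAB, hAq.sup_eq_top, top_inf_eq]

lemma IsSemisimple.exists_isGenerators {s f : End R M} (hs : s.IsSemisimple)
    (hsf : Commute s f) : ∃ W : ℕ → Submodule R M,
      JordanChains.IsGenerators f W ∧ ∀ j, W j ∈ s.invtSubmodule := by
  have hK : ∀ j, ker (f ^ j) ∈ s.invtSubmodule :=
    fun j => ker_mem_invtSubmodule_of_commute (hsf.pow_right j).symm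
  have hI : range f ∈ s.invtSubmodule := range_mem_invtSubmodule_of_commute hsf.symm
  choose W hWs hdisj hsup using fun j => hs.exists_invtSubmodule_disjoint_sup_eq
    (invtSubmodule.inf_mem (invtSubmodule.sup_mem (hK j) hI) (hK (j + 1))) (hK (j + 1))
    inf_le_right
  have hle : ∀ j, W j ≤ ker (f ^ (j + 1)) := fun j => le_sup_right.trans (hsup j).le
  refine ⟨W, ⟨hle, fun j => disjoint_iff_inf_le.mpr ?_, fun j => ?_⟩, hWs⟩
  · exact (le_inf (le_inf inf_le_right (inf_le_left.trans (hle j))) inf_le_left).trans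
      (hdisj j).le_bot
  · exact (hsup j).symm.le.trans (sup_le_sup_right inf_le_left _)

theorem IsSemisimple.exists_conj_mul_of_isUnit {s n w : End R M} (hs : s.IsSemisimple)
    (hn : IsNilpotent n) (hsn : Commute s n) (hsw : Commute s w) (hw : IsUnit w)
    (hnw : Commute n w) :
    ∃ e : (End R M)ˣ, Commute (e : End R M) s ∧ SemiconjBy (e : End R M) (n * w) n := by
  obtain ⟨N, hN⟩ := hn
  obtain ⟨W, hW, hWs⟩ := hs.exists_isGenerators hsn
  have hW' := hW.mul_of_isUnit hw hnw
  let φ := LinearEquiv.ofBijective _ (hW.eval_bijective (N := N) hN)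
  let ψ := LinearEquiv.ofBijective _ (hW'.eval_bijective (N := N) (by
    rw [hnw.mul_pow, hN, zero_mul]))
  refine ⟨LinearMap.GeneralLinearGroup.ofLinearEquiv (ψ.symm ≪≫ₗ φ), ?_, ?_⟩
  · exact φ.semiconjBy_symm_trans ψ (JordanChains.eval_map hWs hsn.symm)
      (JordanChains.eval_map hWs (hsn.mul_right hsw).symm)
  · exact φ.semiconjBy_symm_trans ψ (JordanChains.eval_shift hW.le_ker)
      (JordanChains.eval_shift hW'.le_ker)

end Module.End

theorem IsNilpotent.isUnit_geom_sum {A : Type*} [Ring A] {u : A} (hu : IsNilpotent (u - 1))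
    {m : ℕ} (hm : IsUnit (m : A)) : IsUnit (∑ i ∈ Finset.range m, u ^ i) := by
  set c := ∑ i ∈ Finset.range m, ∑ k ∈ Finset.range i, u ^ k
  have hsum : ∑ i ∈ Finset.range m, u ^ i = m + (u - 1) * c := by
    rw [Finset.mul_sum]
    simp_rw [mul_geom_sum]
    simp [Finset.sum_sub_distrib]
  have hc : Commute (u - 1) c := Commute.sum_right _ _ _ fun i _ => Commute.sum_right _ _ _
    fun k _ => ((Commute.refl u).sub_left (Commute.one_left u)).pow_right k
  rw [hsum]
  exact (hc.isNilpotent_mul_right hu).isUnit_add_left_of_commute hm (Nat.cast_commute m _).symm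

theorem conjugate_unipotent_to_power_in_centralizer_general
    (K : Type*) [Field K] [CharZero K]
    (V : Type*) [AddCommGroup V] [Module K V]
    (s u : (Module.End K V)ˣ)
    (hcomm : s * u = u * s)
    (hs : Squarefree (minpoly K (s : Module.End K V)))
    (hu : IsNilpotent ((u : Module.End K V) - 1)) :
    ∀ m : ℕ, 0 < m → ∃ h : (Module.End K V)ˣ,
      h * s = s * h ∧ h⁻¹ * u * h = u ^ m := by
  intro m hm
  have hss : (s : Module.End K V).IsSemisimple :=
    Module.End.isSemisimple_of_squarefree_aeval_eq_zero hs (minpoly.aeval K _)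
  have hsu : Commute (s : Module.End K V) u := congrArg Units.val hcomm
  have hm' : IsUnit (m : Module.End K V) := by
    simpa using (Nat.cast_ne_zero.mpr hm.ne' : (m : K) ≠ 0).isUnit.map
      (algebraMap K (Module.End K V))
  have hnw : Commute ((u : Module.End K V) - 1)
      (∑ i ∈ Finset.range m, (u : Module.End K V) ^ i) :=
    Commute.sum_right _ _ _ fun i _ =>
      ((Commute.refl _).sub_left (Commute.one_left _)).pow_right i
  obtain ⟨h, hhs, hhu⟩ := hss.exists_conj_mul_of_isUnit hu (hsu.sub_right (Commute.one_right _))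
    (Commute.sum_right _ _ _ fun i _ => hsu.pow_right i) (hu.isUnit_geom_sum hm') hnw
  rw [SemiconjBy, mul_geom_sum, mul_sub, sub_mul, mul_one, one_mul, sub_left_inj] at hhu
  refine ⟨h, Units.ext hhs, ?_⟩
  rw [mul_assoc, inv_mul_eq_iff_eq_mul]
  exact Units.ext (by simpa using hhu.symm)

/-- Let `K` be a field of characteristic zero, `V` a finite-dimensional `K`-vector space, and
`s, u ∈ GL(V)` commuting automorphisms with `s` semisimple (squarefree minimal polynomial) and
`u` unipotent (`u - 1` nilpotent). Then for every positive integer `m` there exists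
`h ∈ GL(V)` commuting with `s` such that `h⁻¹ * u * h = u ^ m`. -/
theorem conjugate_unipotent_to_power_in_centralizer
    (K : Type*) [Field K] [CharZero K]
    (V : Type*) [AddCommGroup V] [Module K V] [FiniteDimensional K V]
    (s u : (Module.End K V)ˣ)
    (hcomm : s * u = u * s)
    (hs : Squarefree (minpoly K (s : Module.End K V)))
    (hu : IsNilpotent ((u : Module.End K V) - 1)) :
    ∀ m : ℕ, 0 < m → ∃ h : (Module.End K V)ˣ,
      h * s = s * h ∧ h⁻¹ * u * h = u ^ m :=
  conjugate_unipotent_to_power_in_centralizer_general K V s u hcomm hs hu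
end

section
/- Let K be a finite extension of ℚ_p, with v : K^× → ℚ the unique extension of the p-adic valuation (normalized so that v(p) = 1). Let I ⊂ ℤ be a finite set, let V = ⊕_{i ∈ I} V_i be a finite-dimensional K-vector space graded by I, and let n be a positive integer. Let α ∈ GL(V) be an automorphism that preserves each summand V_i, is diagonalizable over K, and such that every eigenvalue of α on V_i has valuation exactly n·i. For t ∈ K^×, let μ_t ∈ GL(V) be the automorphism acting on V_i as multiplication by tⁱ. Then for every t ∈ K^×, μ_t lies in the Zariski closure in GL(V) of the cyclic subgroup generated by α: with respect to any fixed basis of V, every polynomial in the matrix entries of g and of g⁻¹ that vanishes at αᵏ for all integers k also vanishes at μ_t. -/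
/-!
Diagonalize `α` in a basis `b₀` with eigenvalues `c j`. As `v (c j)` is `n` times the degree,
each `b₀ j` is homogeneous, of degree `d j` say, so `μ_t` is diagonal in the same basis with
eigenvalues `t ^ d j`. Restricted to automorphisms diagonal in `b₀`, a polynomial in the entries
of `g` and `g⁻¹` is a Laurent polynomial `Q` in the eigenvalues. Grouping the monomials of `Q` by
their value `λ = c ^ e` at `α`, the hypothesis reads `∑ λ, A λ * λ ^ k = 0` for all `k`, so each
coefficient sum `A λ` vanishes by Dedekind's independence of characters. Since
`v (c ^ e) = n * ∑ j, d j * e j`, the value `c ^ e` determines the value `t ^ ∑ j, d j * e j` of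
the same monomial at `μ_t`, so `Q` vanishes there too.
-/

open MvPolynomial

section Characters

variable {R : Type*} [CommRing R] [IsDomain R]

theorem eq_zero_of_forall_sum_mul_zpow_eq_zero {T : Finset Rˣ} {A : Rˣ → R}
    (h : ∀ k : ℤ, ∑ u ∈ T, A u * ((u ^ k : Rˣ) : R) = 0) : ∀ u ∈ T, A u = 0 := by
  have hli : LinearIndependent R fun u : Rˣ => ⇑((Units.coeHom R).comp (zpowersHom Rˣ u)) :=
    (linearIndependent_monoidHom _ R).comp _ fun u u' huu' =>
      Units.ext (by simpa using DFunLike.congr_fun huu' (Multiplicative.ofAdd 1))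
  exact linearIndependent_iff'.mp hli T A (funext fun k => by simpa using h k.toAdd)

theorem sum_mul_eq_zero_of_factorsThrough {M : Type*} {S : Finset M} {a : M → R}
    {χ : M → Rˣ} {η : M → R} (hη : η.FactorsThrough χ)
    (h : ∀ k : ℤ, ∑ m ∈ S, a m * ((χ m ^ k : Rˣ) : R) = 0) : ∑ m ∈ S, a m * η m = 0 := by
  classical
  have regroup : ∀ F : Rˣ → R, ∑ m ∈ S, a m * F (χ m)
      = ∑ u ∈ S.image χ, (∑ m ∈ S with χ m = u, a m) * F u := by
    intro F
    rw [← Finset.sum_fiberwise_of_maps_to fun m hm => Finset.mem_image_of_mem χ hm]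
    refine Finset.sum_congr rfl fun u _ => ?_
    rw [Finset.sum_mul]
    exact Finset.sum_congr rfl fun m hm => by rw [(Finset.mem_filter.mp hm).2]
  have hfiber := eq_zero_of_forall_sum_mul_zpow_eq_zero fun k =>
    (regroup fun u => ((u ^ k : Rˣ) : R)).symm.trans (h k)
  calc ∑ m ∈ S, a m * η m = ∑ m ∈ S, a m * Function.extend χ η 0 (χ m) := by
        simp only [hη.extend_apply]
    _ = 0 := by
      rw [regroup]
      exact Finset.sum_eq_zero fun u hu => by rw [hfiber u hu, zero_mul]

end Characters

section Laurent

variable {R σ : Type*} [CommRing R] [Fintype σ]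

def laurentPoint (u : σ → Rˣ) : σ ⊕ σ → R :=
  Sum.elim (fun j => (u j : R)) (fun j => ((u j)⁻¹ : Rˣ))

def laurentExponent (m : (σ ⊕ σ) →₀ ℕ) (j : σ) : ℤ := m (.inl j) - m (.inr j)

theorem eval_laurentPoint (u : σ → Rˣ) (Q : MvPolynomial (σ ⊕ σ) R) :
    eval (laurentPoint u) Q
      = ∑ m ∈ Q.support, coeff m Q * ((∏ j, u j ^ laurentExponent m j : Rˣ) : R) := by
  rw [eval_eq']
  refine Finset.sum_congr rfl fun m _ => congrArg _ ?_
  rw [Fintype.prod_sum_type, ← Finset.prod_mul_distrib, Units.coe_prod]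
  refine Finset.prod_congr rfl fun j _ => ?_
  simp [laurentPoint, laurentExponent, zpow_sub, ← inv_pow]

theorem eval_laurentPoint_eq_zero_of_forall_zpow [IsDomain R] {x y : σ → Rˣ}
    (hxy : ∀ e e' : σ → ℤ, ∏ j, x j ^ e j = ∏ j, x j ^ e' j → ∏ j, y j ^ e j = ∏ j, y j ^ e' j)
    {Q : MvPolynomial (σ ⊕ σ) R} (hQ : ∀ k : ℤ, eval (laurentPoint (x ^ k)) Q = 0) :
    eval (laurentPoint y) Q = 0 := by
  rw [eval_laurentPoint]
  refine sum_mul_eq_zero_of_factorsThrough (χ := fun m => ∏ j, x j ^ laurentExponent m j)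
    (fun m m' hm => by simp only [hxy _ _ hm]) fun k => ?_
  simpa only [eval_laurentPoint, Pi.pow_apply, ← Finset.prod_zpow, ← zpow_mul, mul_comm]
    using hQ k

end Laurent

noncomputable section

namespace Module.Basis

variable {R V ι₀ : Type*} [CommRing R] [AddCommGroup V] [Module R V]

def diagonalAut (b₀ : Basis ι₀ R V) : (ι₀ → Rˣ) →* (V ≃ₗ[R] V) where
  toFun u := b₀.equiv (b₀.unitsSMul u) (Equiv.refl ι₀)
  map_one' := b₀.ext' fun j => by simp [unitsSMul_apply]
  map_mul' u w := b₀.ext' fun j => by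
    simpa [unitsSMul_apply, Units.smul_def, mul_smul] using smul_comm _ _ _

@[simp]
theorem diagonalAut_apply_self (b₀ : Basis ι₀ R V) (u : ι₀ → Rˣ) (j : ι₀) :
    b₀.diagonalAut u (b₀ j) = (u j : R) • b₀ j := by
  simp [diagonalAut, unitsSMul_apply, Units.smul_def]

theorem eq_diagonalAut {b₀ : Basis ι₀ R V} {g : V ≃ₗ[R] V} {u : ι₀ → Rˣ}
    (hg : ∀ j, g (b₀ j) = (u j : R) • b₀ j) : g = b₀.diagonalAut u :=
  b₀.ext' fun j => by rw [hg, diagonalAut_apply_self]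

variable {ι : Type*} [Fintype ι] [DecidableEq ι] [Fintype ι₀]

theorem toMatrix_diagonalAut (b₀ : Basis ι₀ R V) (b : Basis ι R V) (u : ι₀ → Rˣ) (r s : ι) :
    LinearMap.toMatrix b b (b₀.diagonalAut u).toLinearMap r s
      = ∑ j, b₀.repr (b s) j * b.repr (b₀ j) r * u j := by
  rw [LinearMap.toMatrix_apply, LinearEquiv.coe_coe]
  conv_lhs => rw [← b₀.sum_repr (b s)]
  simp only [map_sum, map_smul, diagonalAut_apply_self, smul_smul, Finsupp.coe_finsetSum,
    Finset.sum_apply, Finsupp.smul_apply, smul_eq_mul]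
  exact Finset.sum_congr rfl fun j _ => by ring

def matrixEntries (b : Basis ι R V) (g : V ≃ₗ[R] V) : (ι × ι) ⊕ (ι × ι) → R :=
  Sum.elim (fun ij => LinearMap.toMatrix b b g.toLinearMap ij.1 ij.2)
    (fun ij => LinearMap.toMatrix b b g⁻¹.toLinearMap ij.1 ij.2)

theorem exists_eval_matrixEntries_diagonalAut_eq (b₀ : Basis ι₀ R V) (b : Basis ι R V)
    (P : MvPolynomial ((ι × ι) ⊕ (ι × ι)) R) :
    ∃ Q : MvPolynomial (ι₀ ⊕ ι₀) R,
      ∀ u, eval (b.matrixEntries (b₀.diagonalAut u)) P = eval (laurentPoint u) Q := by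
  let entry (rs : ι × ι) (y : ι₀ → MvPolynomial (ι₀ ⊕ ι₀) R) : MvPolynomial (ι₀ ⊕ ι₀) R :=
    ∑ j, C (b₀.repr (b rs.2) j * b.repr (b₀ j) rs.1) * y j
  refine ⟨bind₁ (Sum.elim (fun rs => entry rs (X ∘ .inl)) (fun rs => entry rs (X ∘ .inr))) P,
    fun u => ?_⟩
  rw [eval, eval, eval₂Hom_bind₁]
  congr 2
  funext rs
  rcases rs with rs | rs <;>
    simp [matrixEntries, entry, laurentPoint, toMatrix_diagonalAut, ← map_inv]

end Module.Basis

end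

namespace DirectSum

variable {ι R M : Type*} [DecidableEq ι] [Semiring R] [AddCommMonoid M] [Module R M]
  (ℳ : ι → Submodule R M) [Decomposition ℳ]

theorem decompose_apply_of_mapsTo {f : M →ₗ[R] M} (hf : ∀ i, ∀ x ∈ ℳ i, f x ∈ ℳ i)
    (x : M) (i : ι) : (decompose ℳ (f x) i : M) = f (decompose ℳ x i) := by
  induction x using Decomposition.inductionOn ℳ with
  | zero => simp
  | @homogeneous j y =>
    by_cases hij : j = i
    · subst hij
      rw [decompose_of_mem_same ℳ (hf j y y.2), decompose_of_mem_same ℳ y.2]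
    · rw [decompose_of_mem_ne ℳ (hf j y y.2) hij, decompose_of_mem_ne ℳ y.2 hij, map_zero]
  | add x y hx hy => simp [decompose_add, hx, hy]

theorem exists_mem_of_apply_eq_smul {f : M →ₗ[R] M} (hf : ∀ i, ∀ x ∈ ℳ i, f x ∈ ℳ i) {c : R}
    (hc : {i | ∃ y ∈ ℳ i, y ≠ 0 ∧ f y = c • y}.Subsingleton) {x : M} (hx0 : x ≠ 0)
    (hx : f x = c • x) : ∃ i, x ∈ ℳ i := by
  have heigen : ∀ i, f (decompose ℳ x i) = c • (decompose ℳ x i : M) := fun i => by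
    rw [← decompose_apply_of_mapsTo ℳ hf, hx, decompose_smul]; rfl
  obtain ⟨i₀, hi₀⟩ : ∃ i, (decompose ℳ x i : M) ≠ 0 := by
    by_contra! h
    exact hx0 ((decompose ℳ).injective (DFinsupp.ext fun i => by simpa using h i))
  have hsingle : decompose ℳ x = of _ i₀ (decompose ℳ x i₀) := by
    refine DFinsupp.ext fun i => ?_
    by_cases hi : i = i₀
    · subst hi; simp
    · rw [of_eq_of_ne i₀ i _ hi]
      by_contra hne
      exact hi (hc ⟨_, (decompose ℳ x i).2, by simpa using hne, heigen i⟩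
        ⟨_, (decompose ℳ x i₀).2, hi₀, heigen i₀⟩)
  refine ⟨i₀, ?_⟩
  rw [← (decompose ℳ).symm_apply_apply x, hsingle, decompose_symm_of]
  exact SetLike.coe_mem _

end DirectSum

def valuationHom {K : Type*} [Field K] (v : K → ℚ)
    (hv : ∀ x y : K, x ≠ 0 → y ≠ 0 → v (x * y) = v x + v y) : Kˣ →* Multiplicative ℚ :=
  MonoidHom.mk' (fun u => .ofAdd (v u)) fun u w => by simp [hv _ _ u.ne_zero w.ne_zero]

theorem Finset.prod_zpow_eq_zpow_sum {G ι : Type*} [CommGroup G] (s : Finset ι) (a : G)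
    (f : ι → ℤ) : ∏ i ∈ s, a ^ f i = a ^ ∑ i ∈ s, f i := by
  classical
  induction s using Finset.cons_induction <;> simp [*, zpow_add]

theorem prod_zpow_zpow_eq_of_prod_zpow_eq {G H σ : Type*} [CommGroup G] [CommGroup H]
    [Fintype σ] (w : G →* Multiplicative ℚ) {n : ℚ} (hn : n ≠ 0) {x : σ → G} {d : σ → ℤ}
    (hw : ∀ j, (w (x j)).toAdd = n * d j) (t : H) {e e' : σ → ℤ}
    (h : ∏ j, x j ^ e j = ∏ j, x j ^ e' j) : ∏ j, (t ^ d j) ^ e j = ∏ j, (t ^ d j) ^ e' j := by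
  have hval : ∀ e : σ → ℤ, (w (∏ j, x j ^ e j)).toAdd = n * ∑ j, d j * e j := fun e => by
    simp only [map_prod, map_zpow, toAdd_prod, toAdd_zpow, hw, zsmul_eq_mul]
    push_cast
    rw [Finset.mul_sum]
    exact Finset.sum_congr rfl fun j _ => by ring
  have hsum : ∑ j, d j * e j = ∑ j, d j * e' j := by
    have := hval e
    rw [h, hval e'] at this
    exact_mod_cast (mul_left_cancel₀ hn this).symm
  simp only [← zpow_mul, Finset.prod_zpow_eq_zpow_sum, hsum]

theorem grading_cocharacter_in_zariski_closure_of_frobenius_general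
    (K : Type*) [Field K]
    (v : K → ℚ)
    (hv_mul : ∀ x y : K, x ≠ 0 → y ≠ 0 → v (x * y) = v x + v y)
    (V : Type*) [AddCommGroup V] [Module K V]
    (Vsub : ℤ → Submodule K V)
    (hinternal : DirectSum.IsInternal Vsub)
    (n : ℕ) (hn : 0 < n)
    (α : V ≃ₗ[K] V)
    (hpres : ∀ (i : ℤ), ∀ x ∈ Vsub i, α x ∈ Vsub i)
    (hdiag : ∃ (ι : Type) (_ : Fintype ι) (b : Module.Basis ι K V),
      ∀ j : ι, ∃ c : K, α (b j) = c • b j)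
    (heig : ∀ (i : ℤ) (c : K) (x : V), x ∈ Vsub i → x ≠ 0 → α x = c • x →
      v c = (n : ℚ) * (i : ℚ)) :
    ∀ (t : Kˣ) (μ : V ≃ₗ[K] V),
      (∀ (i : ℤ), ∀ x ∈ Vsub i, μ x = ((t ^ i : Kˣ) : K) • x) →
      ∀ (ι : Type) (_ : Fintype ι) (_ : DecidableEq ι) (b : Module.Basis ι K V)
        (P : MvPolynomial ((ι × ι) ⊕ (ι × ι)) K),
        (∀ k : ℤ, MvPolynomial.eval
          (Sum.elim
            (fun ij : ι × ι => LinearMap.toMatrix b b (α ^ k).toLinearMap ij.1 ij.2)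
            (fun ij : ι × ι => LinearMap.toMatrix b b ((α ^ k)⁻¹).toLinearMap ij.1 ij.2)) P = 0) →
        MvPolynomial.eval
          (Sum.elim
            (fun ij : ι × ι => LinearMap.toMatrix b b μ.toLinearMap ij.1 ij.2)
            (fun ij : ι × ι => LinearMap.toMatrix b b μ⁻¹.toLinearMap ij.1 ij.2)) P = 0 := by
  intro t μ hμ ι _ _ b P hP
  let := hinternal.chooseDecomposition
  obtain ⟨ι₀, _, b₀, hb₀⟩ := hdiag
  choose c hc using hb₀
  have hc0 (j : ι₀) : c j ≠ 0 := fun h0 =>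
    b₀.ne_zero j (α.map_eq_zero_iff.mp (by rw [hc, h0, zero_smul]))
  have hdeg_unique (c : K) : {i | ∃ y ∈ Vsub i, y ≠ 0 ∧ α y = c • y}.Subsingleton := by
    rintro i ⟨y, hy, hy0, hαy⟩ i' ⟨y', hy', hy0', hαy'⟩
    have := (heig i c y hy hy0 hαy).symm.trans (heig i' c y' hy' hy0' hαy')
    exact_mod_cast mul_left_cancel₀ (by positivity) this
  have hdeg (j : ι₀) : ∃ i, b₀ j ∈ Vsub i :=
    DirectSum.exists_mem_of_apply_eq_smul Vsub (f := α.toLinearMap) hpres (hdeg_unique _)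
      (b₀.ne_zero j) (hc j)
  choose d hd using hdeg
  let cU (j : ι₀) : Kˣ := .mk0 (c j) (hc0 j)
  have hα : α = b₀.diagonalAut cU := Module.Basis.eq_diagonalAut hc
  have hμ' : μ = b₀.diagonalAut fun j => t ^ d j :=
    Module.Basis.eq_diagonalAut fun j => hμ _ _ (hd j)
  obtain ⟨Q, hQ⟩ := b₀.exists_eval_matrixEntries_diagonalAut_eq b P
  change MvPolynomial.eval (b.matrixEntries μ) P = 0
  rw [hμ', hQ]
  refine eval_laurentPoint_eq_zero_of_forall_zpow (x := cU)
    (fun e e' => prod_zpow_zpow_eq_of_prod_zpow_eq (valuationHom v hv_mul) (n := n) (by positivity)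
      (fun j => heig _ _ _ (hd j) (b₀.ne_zero j) (hc j)) t) fun k => ?_
  rw [← hQ, map_zpow, ← hα]
  exact hP k

/-- Let `K` be a finite extension of `ℚ_p` with `v : K → ℚ` the (unique) extension of the
`p`-adic valuation, normalized by `v p = 1` (encoded by: `v` is additive on products of
nonzero elements and restricts to the standard valuation on `ℚ_p`). Let `V = ⊕_{i ∈ I} V_i`
be a finite-dimensional graded `K`-vector space (`I ⊆ ℤ` finite), `n > 0`, and `α ∈ GL(V)` an
automorphism preserving each `V_i`, diagonalizable over `K`, all of whose eigenvalues on `V_i`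
have valuation exactly `n·i`. For `t ∈ Kˣ` let `μ_t ∈ GL(V)` act on `V_i` by `t^i`. Then each
`μ_t` lies in the Zariski closure of the cyclic group generated by `α`: in any fixed basis of
`V`, every polynomial in the matrix entries of `g` and `g⁻¹` vanishing at `α^k` for all
integers `k` also vanishes at `μ_t`. -/
theorem grading_cocharacter_in_zariski_closure_of_frobenius
    (p : ℕ) [Fact p.Prime]
    (K : Type*) [Field K] [Algebra ℚ_[p] K] [FiniteDimensional ℚ_[p] K]
    (v : K → ℚ)
    (hv_mul : ∀ x y : K, x ≠ 0 → y ≠ 0 → v (x * y) = v x + v y)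
    (hv_ext : ∀ x : ℚ_[p], x ≠ 0 → v (algebraMap ℚ_[p] K x) = x.valuation)
    (V : Type*) [AddCommGroup V] [Module K V] [FiniteDimensional K V]
    (I : Finset ℤ) (Vsub : ℤ → Submodule K V)
    (hinternal : DirectSum.IsInternal Vsub)
    (hsupp : ∀ i : ℤ, i ∉ I → Vsub i = ⊥)
    (n : ℕ) (hn : 0 < n)
    (α : V ≃ₗ[K] V)
    (hpres : ∀ (i : ℤ), ∀ x ∈ Vsub i, α x ∈ Vsub i)
    (hdiag : ∃ (ι : Type) (_ : Fintype ι) (b : Module.Basis ι K V),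
      ∀ j : ι, ∃ c : K, α (b j) = c • b j)
    (heig : ∀ (i : ℤ) (c : K) (x : V), x ∈ Vsub i → x ≠ 0 → α x = c • x →
      v c = (n : ℚ) * (i : ℚ)) :
    ∀ (t : Kˣ) (μ : V ≃ₗ[K] V),
      (∀ (i : ℤ), ∀ x ∈ Vsub i, μ x = ((t ^ i : Kˣ) : K) • x) →
      ∀ (ι : Type) (_ : Fintype ι) (_ : DecidableEq ι) (b : Module.Basis ι K V)
        (P : MvPolynomial ((ι × ι) ⊕ (ι × ι)) K),
        (∀ k : ℤ, MvPolynomial.eval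
          (Sum.elim
            (fun ij : ι × ι => LinearMap.toMatrix b b (α ^ k).toLinearMap ij.1 ij.2)
            (fun ij : ι × ι => LinearMap.toMatrix b b ((α ^ k)⁻¹).toLinearMap ij.1 ij.2)) P = 0) →
        MvPolynomial.eval
          (Sum.elim
            (fun ij : ι × ι => LinearMap.toMatrix b b μ.toLinearMap ij.1 ij.2)
            (fun ij : ι × ι => LinearMap.toMatrix b b μ⁻¹.toLinearMap ij.1 ij.2)) P = 0 :=
  grading_cocharacter_in_zariski_closure_of_frobenius_general K v hv_mul V Vsub hinternal n hn α
    hpres hdiag heig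
end
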